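/- arXiv:2112.05095 — 4 statements merged into one kernel-verified Lean document; each statement's English description precedes it below -/
import Mathlib

section
/- Let d ≥ 1, σ > 0, and let μ_A, μ_B ∈ ℝ^d be unit vectors each of whose entries has absolute value 1/√d, with ⟨μ_A, μ_B⟩ ≥ 0. Define the population losses L_T(θ) = (⟨θ, μ_T⟩ − 1)² + σ²‖θ‖² for T ∈ {A, B}, let θ_A = μ_A/(1+σ²) (the minimizer of L_A), and let D_A = σ² I_d + diag(μ_A μ_Aᵀ) be the diagonal matrix whose diagonal equals that of σ² I_d + μ_A μ_Aᵀ. Then there exist λ ≥ 0 and c > 0 such that the unique minimizer over θ ∈ ℝ^d of the EWC objective L_B(θ) + λ (θ − θ_A)ᵀ D_A (θ − θ_A) equals c·(μ_A + μ_B). -/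
open Matrix

/-- Euclidean norm of a vector. -/
noncomputable def vnorm {ι : Type*} [Fintype ι] (v : ι → ℝ) : ℝ :=
  Real.sqrt (∑ i, v i ^ 2)

/-- The EWC objective `L_B(θ) + λ (θ − θ_A)ᵀ D_A (θ − θ_A)`, where
`L_B(θ) = (⟨θ, μ_B⟩ − 1)² + σ²‖θ‖²`, `θ_A = μ_A/(1+σ²)` and
`D_A = σ² I_d + diag(μ_A μ_Aᵀ)` (a diagonal matrix with entries `σ² + (μ_A)_i²`). -/
noncomputable def ewcObj {d : ℕ} (σ lam : ℝ) (μA μB : Fin d → ℝ) (θ : Fin d → ℝ) : ℝ :=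
  (θ ⬝ᵥ μB - 1) ^ 2 + σ ^ 2 * vnorm θ ^ 2 +
    lam * ((θ - (1 + σ ^ 2)⁻¹ • μA) ⬝ᵥ
      (Matrix.diagonal fun i => σ ^ 2 + μA i ^ 2).mulVec (θ - (1 + σ ^ 2)⁻¹ • μA))

lemma vnorm_sq {ι : Type*} [Fintype ι] (v : ι → ℝ) : vnorm v ^ 2 = v ⬝ᵥ v := by
  rw [vnorm, Real.sq_sqrt (Finset.sum_nonneg fun i _ => sq_nonneg _)]
  simp [dotProduct, sq]

set_option maxHeartbeats 1000000 in
/-- for unit class means on the hypercube with nonnegative inner product,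
there exist `λ ≥ 0` and `c > 0` such that the unique minimizer of the EWC objective is
`c (μ_A + μ_B)` (the Bayes-optimal direction). -/
theorem stmt11 (d : ℕ) (hd : 1 ≤ d) (σ : ℝ) (hσ : 0 < σ) (μA μB : Fin d → ℝ)
    (hentA : ∀ i, |μA i| = 1 / Real.sqrt d) (hentB : ∀ i, |μB i| = 1 / Real.sqrt d)
    (hunitA : vnorm μA = 1) (hunitB : vnorm μB = 1)
    (hAB : 0 ≤ μA ⬝ᵥ μB) :
    ∃ lam : ℝ, 0 ≤ lam ∧ ∃ c : ℝ, 0 < c ∧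
      ∀ θ : Fin d → ℝ, θ ≠ c • (μA + μB) →
        ewcObj σ lam μA μB (c • (μA + μB)) < ewcObj σ lam μA μB θ := by
  have hd0 : (0:ℝ) < d := by exact_mod_cast hd
  have hA2 : ∀ i, μA i ^ 2 = 1 / d := by
    intro i
    have h := congrArg (· ^ 2) (hentA i)
    simpa [sq_abs, div_pow, Real.sq_sqrt hd0.le] using h
  set κ : ℝ := σ ^ 2 + 1 / d with hκdef
  have hκ : 0 < κ := by positivity
  set ρ : ℝ := μA ⬝ᵥ μB with hρdef
  have hAA : μA ⬝ᵥ μA = 1 := by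
    have h := vnorm_sq μA
    rw [hunitA] at h; linarith [h]
  have hBB : μB ⬝ᵥ μB = 1 := by
    have h := vnorm_sq μB
    rw [hunitB] at h; linarith [h]
  set s : ℝ := Real.sqrt (ρ ^ 2 + 4 * σ ^ 2 * (1 + σ ^ 2)) with hsdef
  have hs2 : s ^ 2 = ρ ^ 2 + 4 * σ ^ 2 * (1 + σ ^ 2) := Real.sq_sqrt (by positivity)
  have hs0 : 0 ≤ s := Real.sqrt_nonneg _
  have hsgt : ρ < s := by nlinarith [sq_nonneg (s - ρ), sq_nonneg (s + ρ)]
  set t : ℝ := (s - ρ) / 2 with htdef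
  have ht0 : 0 < t := by simp only [htdef]; linarith
  have htq : t ^ 2 + ρ * t = σ ^ 2 * (1 + σ ^ 2) := by
    simp only [htdef]; linear_combination hs2 / 4
  set b : ℝ := (1 + σ ^ 2)⁻¹ with hbdef
  have hb : b * (1 + σ ^ 2) = 1 := by
    rw [hbdef]; field_simp
  set c : ℝ := t / ((1 + σ ^ 2) * (σ ^ 2 + t)) with hcdef
  have hc0 : 0 < c := by positivity
  have hc : c * ((1 + σ ^ 2) * (σ ^ 2 + t)) = t := by
    rw [hcdef]; field_simp
  have hden : ((1 + σ ^ 2) * (σ ^ 2 + t)) ≠ 0 := by positivity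
  have key1 : σ ^ 2 * c + t * c - t * b = 0 := by
    have h' : (σ ^ 2 * c + t * c - t * b) * ((1 + σ ^ 2) * (σ ^ 2 + t)) = 0 := by
      linear_combination (σ ^ 2 + t) * hc - t * (σ ^ 2 + t) * hb
    exact (mul_eq_zero.mp h').resolve_right hden
  have key2 : c * (ρ + 1) - 1 + σ ^ 2 * c + t * c = 0 := by
    have h' : (c * (ρ + 1) - 1 + σ ^ 2 * c + t * c) * ((1 + σ ^ 2) * (σ ^ 2 + t)) = 0 := by
      linear_combination (ρ + 1 + σ ^ 2 + t) * hc + htq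
    exact (mul_eq_zero.mp h').resolve_right hden
  refine ⟨t / κ, by positivity, c, hc0, ?_⟩
  intro θ hθ
  -- rewrite the objective in terms of dot products
  have hobj : ∀ w : Fin d → ℝ, ewcObj σ (t / κ) μA μB w =
      (w ⬝ᵥ μB - 1) ^ 2 + σ ^ 2 * (w ⬝ᵥ w) +
        t * ((w ⬝ᵥ w) - 2 * b * (μA ⬝ᵥ w) + b ^ 2) := by
    intro w
    have hdiag : (Matrix.diagonal fun i => σ ^ 2 + μA i ^ 2).mulVec (w - b • μA)
        = κ • (w - b • μA) := by
      funext i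
      simp [Matrix.mulVec_diagonal, hA2 i, hκdef]
    rw [ewcObj, vnorm_sq, hdiag]
    have hexp : (w - b • μA) ⬝ᵥ (κ • (w - b • μA))
        = κ * ((w ⬝ᵥ w) - 2 * b * (μA ⬝ᵥ w) + b ^ 2) := by
      rw [dotProduct_smul]
      simp only [sub_dotProduct, dotProduct_sub, smul_dotProduct, dotProduct_smul,
        smul_eq_mul, hAA]
      rw [dotProduct_comm w μA]
      ring
    rw [hexp]
    have : t / κ * (κ * ((w ⬝ᵥ w) - 2 * b * (μA ⬝ᵥ w) + b ^ 2))
        = t * ((w ⬝ᵥ w) - 2 * b * (μA ⬝ᵥ w) + b ^ 2) := by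
      field_simp
    rw [this]
  rw [hobj θ, hobj (c • (μA + μB))]
  set v : Fin d → ℝ := θ - c • (μA + μB) with hvdef
  have hv : θ = c • (μA + μB) + v := by simp [hvdef]
  have hvne : v ≠ 0 := by
    intro h
    apply hθ
    have h2 := hv
    rw [h, add_zero] at h2
    exact h2
  set x : ℝ := μA ⬝ᵥ v with hxdef
  set y : ℝ := μB ⬝ᵥ v with hydef
  set m : ℝ := v ⬝ᵥ v with hmdef
  have hcvA : v ⬝ᵥ μA = x := by rw [hxdef, dotProduct_comm]
  have hcvB : v ⬝ᵥ μB = y := by rw [hydef, dotProduct_comm]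
  have hBA : μB ⬝ᵥ μA = ρ := by rw [hρdef, dotProduct_comm]
  have hm0 : 0 < m := by
    obtain ⟨i, hi⟩ := Function.ne_iff.mp hvne
    have hi' : v i ≠ 0 := by simpa using hi
    rw [hmdef]
    exact Finset.sum_pos' (fun j _ => mul_self_nonneg _)
      ⟨i, Finset.mem_univ i, mul_self_pos.mpr hi'⟩
  have hθB : θ ⬝ᵥ μB = c * (ρ + 1) + y := by
    rw [hv]
    simp only [add_dotProduct, smul_dotProduct, smul_eq_mul, hBB, hcvB, ← hρdef]
  have hθA : μA ⬝ᵥ θ = c * (1 + ρ) + x := by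
    rw [hv]
    simp only [dotProduct_add, dotProduct_smul, smul_eq_mul, hAA, ← hρdef, ← hxdef]
  have hθθ : θ ⬝ᵥ θ = c ^ 2 * (2 + 2 * ρ) + 2 * c * (x + y) + m := by
    rw [hv]
    simp only [add_dotProduct, dotProduct_add, smul_dotProduct, dotProduct_smul,
      smul_eq_mul, hAA, hBB, hcvA, hcvB, hBA, ← hρdef, ← hxdef, ← hydef, ← hmdef]
    ring
  have hstarB : (c • (μA + μB)) ⬝ᵥ μB = c * (ρ + 1) := by
    simp only [smul_dotProduct, add_dotProduct, smul_eq_mul, hBB, ← hρdef]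
  have hstarA : μA ⬝ᵥ (c • (μA + μB)) = c * (1 + ρ) := by
    simp only [dotProduct_smul, dotProduct_add, smul_eq_mul, hAA, ← hρdef]
  have hstarstar : (c • (μA + μB)) ⬝ᵥ (c • (μA + μB)) = c ^ 2 * (2 + 2 * ρ) := by
    simp only [smul_dotProduct, dotProduct_smul, add_dotProduct, dotProduct_add,
      smul_eq_mul, hAA, hBB, hBA, ← hρdef]
    ring
  rw [hθB, hθA, hθθ, hstarB, hstarA, hstarstar]
  have k1 : 2 * x * (σ ^ 2 * c + t * c - t * b) = 0 := by rw [key1]; ring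
  have k2 : 2 * y * (c * (ρ + 1) - 1 + σ ^ 2 * c + t * c) = 0 := by rw [key2]; ring
  have hpos : 0 < (σ ^ 2 + t) * m := mul_pos (by positivity) hm0
  linarith [sq_nonneg y, hpos, k1, k2]
end

section
/- Let d ≥ 1, σ > 0, and let μ_A, μ_B ∈ ℝ^d be unit vectors each of whose entries has absolute value 1/√d, with ⟨μ_A, μ_B⟩ ≥ 0. Define the population losses L_T(θ) = (⟨θ, μ_T⟩ − 1)² + σ²‖θ‖² for T ∈ {A, B}, and let θ_A = μ_A/(1+σ²) (the minimizer of L_A). Then there exist λ ≥ 0 and c > 0 such that the unique minimizer over θ ∈ ℝ^d of the L2-regularized objective L_B(θ) + λ ‖θ − θ_A‖² equals c·(μ_A + μ_B). -/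
open Matrix

/-- The L2-regularized objective `L_B(θ) + λ‖θ − θ_A‖²`, where
`L_B(θ) = (⟨θ, μ_B⟩ − 1)² + σ²‖θ‖²` and `θ_A = μ_A/(1+σ²)`. -/
noncomputable def l2Obj {d : ℕ} (σ lam : ℝ) (μA μB : Fin d → ℝ) (θ : Fin d → ℝ) : ℝ :=
  (θ ⬝ᵥ μB - 1) ^ 2 + σ ^ 2 * vnorm θ ^ 2 + lam * vnorm (θ - (1 + σ ^ 2)⁻¹ • μA) ^ 2

lemma dot_self_pos {ι : Type*} [Fintype ι] {v : ι → ℝ} (hv : v ≠ 0) : 0 < v ⬝ᵥ v := by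
  have h0 : 0 ≤ v ⬝ᵥ v := Finset.sum_nonneg fun i _ => mul_self_nonneg _
  rcases h0.lt_or_eq with h | h
  · exact h
  · exact absurd ((dotProduct_self_eq_zero).mp h.symm) hv

/-- for unit class means on the hypercube with nonnegative inner product,
there exist `λ ≥ 0` and `c > 0` such that the unique minimizer of the L2-regularized
objective is `c (μ_A + μ_B)` (the Bayes-optimal direction). -/
theorem stmt12 (d : ℕ) (hd : 1 ≤ d) (σ : ℝ) (hσ : 0 < σ) (μA μB : Fin d → ℝ)
    (hentA : ∀ i, |μA i| = 1 / Real.sqrt d) (hentB : ∀ i, |μB i| = 1 / Real.sqrt d)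
    (hunitA : vnorm μA = 1) (hunitB : vnorm μB = 1)
    (hAB : 0 ≤ μA ⬝ᵥ μB) :
    ∃ lam : ℝ, 0 ≤ lam ∧ ∃ c : ℝ, 0 < c ∧
      ∀ θ : Fin d → ℝ, θ ≠ c • (μA + μB) →
        l2Obj σ lam μA μB (c • (μA + μB)) < l2Obj σ lam μA μB θ := by
  have ha : μA ⬝ᵥ μA = 1 := by
    have := vnorm_sq μA; rw [hunitA] at this; simpa using this.symm
  have hb : μB ⬝ᵥ μB = 1 := by
    have := vnorm_sq μB; rw [hunitB] at this; simpa using this.symm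
  set ρ : ℝ := μA ⬝ᵥ μB with hρdef
  have hσ2 : (0:ℝ) < 1 + σ ^ 2 := by positivity
  set s : ℝ := σ ^ 2 * (1 + σ ^ 2) with hsdef
  have hs : 0 < s := by positivity
  set D : ℝ := Real.sqrt (ρ ^ 2 + 4 * s) with hDdef
  have hD2 : D ^ 2 = ρ ^ 2 + 4 * s := Real.sq_sqrt (by positivity)
  set lam : ℝ := (D - ρ) / 2 with hlamdef
  have hρD : ρ < D := by
    rw [hDdef]
    rw [show ρ < Real.sqrt (ρ ^ 2 + 4 * s) ↔ ρ ^ 2 < ρ ^ 2 + 4 * s from Real.lt_sqrt hAB]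
    linarith
  have hlam : 0 < lam := by rw [hlamdef]; linarith
  have hkey : lam ^ 2 + lam * ρ = s := by
    rw [hlamdef]; nlinarith [hD2]
  have hden : 0 < σ ^ 2 + lam + 1 + ρ := by positivity
  set c : ℝ := (σ ^ 2 + lam + 1 + ρ)⁻¹ with hcdef
  have hc : 0 < c := inv_pos.mpr hden
  have eq2 : (σ ^ 2 + lam) * c + c * (1 + ρ) = 1 := by
    rw [hcdef]; field_simp; ring
  have eq1 : (σ ^ 2 + lam) * c = lam * (1 + σ ^ 2)⁻¹ := by
    rw [hcdef]
    field_simp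
    linear_combination (1:ℝ) * hkey - (1/2 : ℝ) * hD2
  refine ⟨lam, hlam.le, c, hc, fun θ hθ => ?_⟩
  have hne : θ - c • (μA + μB) ≠ 0 := sub_ne_zero.mpr hθ
  have hpos : 0 < (θ - c • (μA + μB)) ⬝ᵥ (θ - c • (μA + μB)) := dot_self_pos hne
  have iden : l2Obj σ lam μA μB θ = l2Obj σ lam μA μB (c • (μA + μB))
      + ((θ - c • (μA + μB)) ⬝ᵥ μB) ^ 2
      + (σ ^ 2 + lam) * ((θ - c • (μA + μB)) ⬝ᵥ (θ - c • (μA + μB))) := by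
    simp only [l2Obj, vnorm_sq, sub_dotProduct, dotProduct_sub, add_dotProduct,
      dotProduct_add, smul_dotProduct, dotProduct_smul, smul_eq_mul,
      dotProduct_comm μA θ, dotProduct_comm μB θ, dotProduct_comm μB μA, ha, hb,
      ← hρdef]
    linear_combination (2 * (θ ⬝ᵥ μB - c * (1 + ρ))) * eq2
      + (2 * (θ ⬝ᵥ μA - c * (1 + ρ))) * eq1
  rw [iden]
  nlinarith [sq_nonneg ((θ - c • (μA + μB)) ⬝ᵥ μB), hpos, hlam, sq_nonneg σ]
end

section
/- There exist d ≥ 3, unit vectors μ_A, μ_B ∈ ℝ^d, and σ > 0 with the following property. Define L_T(θ) = (⟨θ, μ_T⟩ − 1)² + σ²‖θ‖² for T ∈ {A, B}, θ_A = μ_A/(1+σ²), D_A = σ² I_d + diag(μ_A μ_Aᵀ), the classification risks R_T(θ) = Φ( −⟨θ, μ_T⟩/(σ‖θ‖) ) for θ ≠ 0, the composite risk R_{AB}(θ) = ½ R_A(θ) + ½ R_B(θ), and θ*_{AB} = μ_A + μ_B. Then for every λ ≥ 0, the minimizer θ_{EWC}(λ) of the EWC objective L_B(θ) + λ (θ −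 θ_A)ᵀ D_A (θ − θ_A) satisfies R_{AB}(θ_{EWC}(λ)) ≥ (3/2) · R_{AB}(θ*_{AB}). -/
open Matrix

/-- Standard normal CDF `Φ(x) = (2π)^{−1/2} ∫_{−∞}^x e^{−t²/2} dt`. -/
noncomputable def Phi (x : ℝ) : ℝ :=
  (Real.sqrt (2 * Real.pi))⁻¹ * ∫ t in Set.Iio x, Real.exp (-t ^ 2 / 2)

/-- Classification risk `R_T(θ) = Φ(−⟨θ, μ_T⟩/(σ‖θ‖))` of the linear classifier
`x ↦ sign⟨θ, x⟩` on the Gaussian mixture task with class means `±μ_T` and noise level `σ`. -/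
noncomputable def gmRisk {d : ℕ} (σ : ℝ) (μ θ : Fin d → ℝ) : ℝ :=
  Phi (-(θ ⬝ᵥ μ) / (σ * vnorm θ))

open MeasureTheory Real Set


lemma gauss_integrable : Integrable (fun t : ℝ => Real.exp (-t ^ 2 / 2)) := by
  have h := integrable_exp_neg_mul_sq (b := (1:ℝ)/2) (by norm_num)
  convert h using 2 with t
  ring_nf

lemma Phi_nonneg (x : ℝ) : 0 ≤ Phi x := by
  unfold Phi
  apply mul_nonneg (by positivity)
  exact setIntegral_nonneg measurableSet_Iio fun t _ => (Real.exp_pos _).le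

lemma Phi_mono {x y : ℝ} (h : x ≤ y) : Phi x ≤ Phi y := by
  unfold Phi
  apply mul_le_mul_of_nonneg_left _ (by positivity)
  apply setIntegral_mono_set gauss_integrable.integrableOn
  · exact Filter.Eventually.of_forall fun t => (Real.exp_pos _).le
  · exact HasSubset.Subset.eventuallyLE (Iio_subset_Iio h)

lemma gauss_total : ∫ t : ℝ, Real.exp (-t ^ 2 / 2) = Real.sqrt (2 * π) := by
  have h := integral_gaussian (1/2)
  rw [show π / (1/2) = 2 * π by ring] at h
  rw [← h]
  congr 1 with t
  ring_nf

lemma Phi_zero : Phi 0 = 1 / 2 := by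
  unfold Phi
  have h1 : ∫ t in Set.Iio (0:ℝ), Real.exp (-t ^ 2 / 2)
      = ∫ t in Set.Iic (0:ℝ), Real.exp (-t ^ 2 / 2) :=
    (integral_Iic_eq_integral_Iio).symm
  have h2 : ∫ t in Set.Iic (0:ℝ), Real.exp (-t ^ 2 / 2)
      = ∫ t in Set.Ioi (0:ℝ), Real.exp (-t ^ 2 / 2) := by
    rw [← neg_zero, ← integral_comp_neg_Iic]
    norm_num
  have h3 := intervalIntegral.integral_Iic_add_Ioi (b := (0:ℝ))
    gauss_integrable.integrableOn gauss_integrable.integrableOn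
  rw [gauss_total] at h3
  have hs : Real.sqrt (2*π) > 0 := by positivity
  have hI : ∫ t in Set.Iic (0:ℝ), Real.exp (-t ^ 2 / 2) = Real.sqrt (2*π) / 2 := by
    linarith [h2, h3]
  rw [h1, hI, inv_mul_eq_div, div_eq_div_iff hs.ne' (by norm_num : (2:ℝ) ≠ 0)]
  ring

lemma Phi_le_chernoff : Phi (-(5/2)) ≤ 1/100 := by
  unfold Phi
  have h1 : ∫ t in Set.Iio (-(5/2):ℝ), Real.exp (-t ^ 2 / 2)
      = ∫ t in Set.Ioi ((5/2):ℝ), Real.exp (-t ^ 2 / 2) := by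
    rw [← integral_Iic_eq_integral_Iio, ← neg_neg (5/2 : ℝ), ← integral_comp_neg_Iic]
    norm_num
  have hint : IntegrableOn (fun t : ℝ => Real.exp (25/8) * Real.exp (-(5/2) * t))
      (Set.Ioi (5/2 : ℝ)) :=
    Integrable.const_mul (exp_neg_integrableOn_Ioi (5/2) (by norm_num : (0:ℝ) < 5/2)) _
  have h2 : ∫ t in Set.Ioi ((5/2):ℝ), Real.exp (-t ^ 2 / 2)
      ≤ ∫ t in Set.Ioi ((5/2):ℝ), Real.exp (25/8) * Real.exp (-(5/2) * t) := by
    apply setIntegral_mono_on gauss_integrable.integrableOn hint measurableSet_Ioi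
    intro t _
    rw [← Real.exp_add]
    apply Real.exp_le_exp.2
    nlinarith [sq_nonneg (t - 5/2)]
  have h3 : ∫ t in Set.Ioi ((5/2):ℝ), Real.exp (25/8) * Real.exp (-(5/2) * t)
      = Real.exp (25/8) * ((5/2:ℝ)⁻¹ * Real.exp (-(25/4))) := by
    rw [integral_const_mul]
    congr 1
    have h4 := integral_comp_mul_left_Ioi (fun x => Real.exp (-x)) (5/2) (b := (5/2:ℝ))
      (by norm_num)
    simp only [smul_eq_mul] at h4
    rw [show ((5:ℝ)/2 * (5/2)) = 25/4 by norm_num] at h4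
    rw [show (fun x : ℝ => Real.exp (-(5/2) * x)) = (fun x : ℝ => Real.exp (-(5/2 * x))) by
      funext x; ring_nf]
    rw [h4, integral_exp_neg_Ioi]
  have hsq : (2:ℝ) ≤ Real.sqrt (2*π) := by
    rw [Real.le_sqrt (by norm_num : (0:ℝ) ≤ 2)]
    · nlinarith [Real.pi_gt_three]
    · positivity
  have hexp2 : Real.exp (-(25/8)) ≤ 1/20 := by
    rw [Real.exp_neg, inv_le_comm₀ (Real.exp_pos _) (by norm_num)]
    have h20 : (20:ℝ) ≤ Real.exp 3 := by
      have h := Real.exp_one_gt_d9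
      have h3 : (2.7182818283:ℝ)^3 ≤ (Real.exp 1)^3 := by
        apply pow_le_pow_left₀ (by norm_num) h.le
      rw [show (Real.exp 1)^3 = Real.exp 3 by
        rw [← Real.exp_nat_mul]; norm_num] at h3
      nlinarith [h3]
    calc ((1:ℝ)/20)⁻¹ = 20 := by norm_num
    _ ≤ Real.exp 3 := h20
    _ ≤ Real.exp (25/8) := Real.exp_le_exp.2 (by norm_num)
  have hI : ∫ t in Set.Iio (-(5/2):ℝ), Real.exp (-t ^ 2 / 2) ≤ 1/50 := by
    rw [h1]
    calc ∫ t in Set.Ioi ((5/2):ℝ), Real.exp (-t ^ 2 / 2)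
        ≤ Real.exp (25/8) * ((5/2:ℝ)⁻¹ * Real.exp (-(25/4))) := h2.trans h3.le
    _ = (2/5) * Real.exp (-(25/8)) := by
        rw [show Real.exp (-(25/8)) = Real.exp (25/8) * Real.exp (-(25/4)) by
          rw [← Real.exp_add]; norm_num]
        ring
    _ ≤ (2/5) * (1/20) := by linarith [hexp2]
    _ = 1/50 := by norm_num
  have hC : (Real.sqrt (2*π))⁻¹ ≤ 1/2 := by
    rw [inv_le_comm₀ (by positivity) (by norm_num)]
    linarith [hsq]
  have hInn : 0 ≤ ∫ t in Set.Iio (-(5/2):ℝ), Real.exp (-t ^ 2 / 2) :=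
    setIntegral_nonneg measurableSet_Iio fun t _ => (Real.exp_pos _).le
  calc (Real.sqrt (2*Real.pi))⁻¹ * ∫ t in Set.Iio (-(5/2):ℝ), Real.exp (-t ^ 2 / 2)
      ≤ (1/2) * (1/50) := mul_le_mul hC hI hInn (by norm_num)
  _ = 1/100 := by norm_num

lemma quad_aux {A B C : ℝ} (hC : 0 < C) (hA : A ≤ C)
    (h : ∀ s : ℝ, 0 ≤ A * s ^ 2 + B * s) : B = 0 := by
  have h1 := h (-(B/(2*C)))
  have hs : (-(B/(2*C)))^2 = B^2/(4*C^2) := by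
    rw [neg_sq, div_pow]; ring_nf
  rw [hs] at h1
  have h4 := mul_le_mul_of_nonneg_left h1 (by positivity : (0:ℝ) ≤ 4*C^2)
  have e : 4*C^2 * (A*(B^2/(4*C^2)) + B*(-(B/(2*C)))) = A*B^2 - 2*C*B^2 := by
    field_simp; ring
  rw [mul_zero, e] at h4
  have h5 : A*B^2 ≤ C*B^2 := mul_le_mul_of_nonneg_right hA (sq_nonneg B)
  have h7 : B^2 ≤ 0 := by nlinarith
  have h8 : B^2 = 0 := le_antisymm h7 (sq_nonneg B)
  exact pow_eq_zero_iff (by norm_num : (2:ℕ) ≠ 0) |>.1 h8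

lemma ewc_expand (lam : ℝ) (v : Fin 3 → ℝ) :
    ewcObj (1/20) lam ![-12/13, -5/13, 0] ![112/113, 15/113, 0] v =
      (112/113 * v 0 + 15/113 * v 1 - 1)^2
      + (1/400) * (v 0 ^ 2 + v 1 ^ 2 + v 2 ^ 2)
      + lam * ((57769/67600) * (v 0 + 4800/5213)^2
             + (10169/67600) * (v 1 + 2000/5213)^2
             + (1/400) * (v 2)^2) := by
  unfold ewcObj vnorm
  rw [Real.sq_sqrt (by positivity)]
  simp only [dotProduct, Matrix.mulVec, Matrix.diagonal, Fin.sum_univ_three,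
    Pi.sub_apply, Pi.smul_apply, smul_eq_mul, Matrix.cons_val_zero, Matrix.cons_val_one,
    Matrix.head_cons, Matrix.cons_val_two, Matrix.tail_cons, Matrix.of_apply]
  norm_num
  ring_nf
  simp only [show ((0:Fin 3) = 2) = False by simp, show ((1:Fin 3) = 2) = False by simp,
    show ((2:Fin 3) = 0) = False by simp, show ((2:Fin 3) = 1) = False by simp,
    if_false]
  ring

set_option maxHeartbeats 1600000 in
/-- there is a problem instance (d ≥ 3, unit means `μ_A, μ_B`, σ > 0) on which
EWC provably fails: for every `λ ≥ 0`, the minimizer of the EWC objective incurs composite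
risk at least `3/2` times the optimal composite risk `R_{AB}(μ_A + μ_B)`. -/
theorem stmt13 :
    ∃ (d : ℕ), 3 ≤ d ∧ ∃ (μA μB : Fin d → ℝ) (σ : ℝ), 0 < σ ∧
      vnorm μA = 1 ∧ vnorm μB = 1 ∧
      ∀ lam : ℝ, 0 ≤ lam →
        ∀ θ : Fin d → ℝ, (∀ θ' : Fin d → ℝ, ewcObj σ lam μA μB θ ≤ ewcObj σ lam μA μB θ') →
          (3 / 2) * ((1 / 2) * gmRisk σ μA (μA + μB) + (1 / 2) * gmRisk σ μB (μA + μB))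
            ≤ (1 / 2) * gmRisk σ μA θ + (1 / 2) * gmRisk σ μB θ := by
  refine ⟨3, le_refl 3, ![-12/13, -5/13, 0], ![112/113, 15/113, 0], 1/20,
    by norm_num, ?_, ?_, ?_⟩
  · unfold vnorm
    rw [Fin.sum_univ_three]
    norm_num [Matrix.cons_val_zero, Matrix.cons_val_one, Matrix.head_cons,
      Matrix.cons_val_two, Matrix.tail_cons]
  · unfold vnorm
    rw [Fin.sum_univ_three]
    norm_num [Matrix.cons_val_zero, Matrix.cons_val_one, Matrix.head_cons,
      Matrix.cons_val_two, Matrix.tail_cons]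
  intro lam hlam θ hmin
  -- stationarity in the two active coordinates
  have key1 : ∀ s : ℝ, 0 ≤ (1/400 + (112/113)^2 + lam*(57769/67600)) * s ^ 2
      + (2*((112/113)*(112/113*θ 0 + 15/113*θ 1 - 1) + (1/400)*θ 0
           + lam*(57769/67600)*(θ 0 + 4800/5213))) * s := by
    intro s
    have h := hmin ![θ 0 + s, θ 1, θ 2]
    rw [ewc_expand lam θ, ewc_expand lam ![θ 0 + s, θ 1, θ 2]] at h
    simp only [Matrix.cons_val_zero, Matrix.cons_val_one, Matrix.head_cons,
      Matrix.cons_val_two, Matrix.tail_cons] at h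
    nlinarith [h]
  have key2 : ∀ s : ℝ, 0 ≤ (1/400 + (15/113)^2 + lam*(10169/67600)) * s ^ 2
      + (2*((15/113)*(112/113*θ 0 + 15/113*θ 1 - 1) + (1/400)*θ 1
           + lam*(10169/67600)*(θ 1 + 2000/5213))) * s := by
    intro s
    have h := hmin ![θ 0, θ 1 + s, θ 2]
    rw [ewc_expand lam θ, ewc_expand lam ![θ 0, θ 1 + s, θ 2]] at h
    simp only [Matrix.cons_val_zero, Matrix.cons_val_one, Matrix.head_cons,
      Matrix.cons_val_two, Matrix.tail_cons] at h
    nlinarith [h]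
  have e1 : 2*((112/113)*(112/113*θ 0 + 15/113*θ 1 - 1) + (1/400)*θ 0
      + lam*(57769/67600)*(θ 0 + 4800/5213)) = 0 := by
    apply quad_aux (C := 1 + lam) (by linarith) _ key1
    nlinarith [hlam]
  have e2 : 2*((15/113)*(112/113*θ 0 + 15/113*θ 1 - 1) + (1/400)*θ 1
      + lam*(10169/67600)*(θ 1 + 2000/5213)) = 0 := by
    apply quad_aux (C := 1 + lam) (by linarith) _ key2
    nlinarith [hlam]
  -- from the stationarity equations: one of the two alignments is nonpositive
  have hDpos : (0:ℝ) < 401/160000 + (28545342361/172636880000)*lam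
      + (587452961/4569760000)*lam^2 := by
    nlinarith [hlam, sq_nonneg lam]
  have haD : ((-12/13)*θ 0 + (-5/13)*θ 1)
        * (401/160000 + (28545342361/172636880000)*lam + (587452961/4569760000)*lam^2)
      = (-1419/587600) + (-224172741739/1169942872072)*lam
        + (587452961/4581184400)*lam^2 := by
    linear_combination ((1/2)*((531693/16599700) + (-30507/219700)*lam)) * e1
      + ((1/2)*((-3417569/13279760) + (-57769/175760)*lam)) * e2
  have hbD : ((112/113)*θ 0 + (15/113)*θ 1)
        * (401/160000 + (28545342361/172636880000)*lam + (587452961/4569760000)*lam^2)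
      = (1/400) + (14477379497/89995605544)*lam
        + (-833595751659/6729759883600)*lam^2 := by
    linear_combination ((1/2)*((7/2825) + (71183/477425)*lam)) * e1
      + ((1/2)*((3/9040) + (173307/1527760)*lam)) * e2
  have hab : (-12/13)*θ 0 + (-5/13)*θ 1 ≤ 0 ∨ (112/113)*θ 0 + (15/113)*θ 1 ≤ 0 := by
    rcases le_total lam (7/5) with hc | hc
    · left
      have hNa : (-1419/587600) + (-224172741739/1169942872072)*lam
          + (587452961/4581184400)*lam^2 ≤ 0 := by
        nlinarith [mul_nonneg hlam (by linarith : (0:ℝ) ≤ 7/5 - lam), hlam]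
      by_contra hpos
      push_neg at hpos
      have hh := mul_pos hpos hDpos
      rw [haD] at hh
      linarith
    · right
      have hNb : (1/400) + (14477379497/89995605544)*lam
          + (-833595751659/6729759883600)*lam^2 ≤ 0 := by
        nlinarith [mul_nonneg (by linarith : (0:ℝ) ≤ lam - 7/5) hlam, hc]
      by_contra hpos
      push_neg at hpos
      have hh := mul_pos hpos hDpos
      rw [hbD] at hh
      linarith
  -- the optimal composite risk is small
  have hsum0 : (![(-12:ℝ)/13, -5/13, 0] + ![112/113, 15/113, 0])
      = ![(100:ℝ)/1469, -370/1469, 0] := by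
    funext i
    fin_cases i <;>
      simp [Matrix.cons_val_zero, Matrix.cons_val_one, Matrix.head_cons] <;> norm_num
  have hv : vnorm ![(100:ℝ)/1469, -370/1469, 0] = Real.sqrt (146900/2157961) := by
    unfold vnorm
    rw [Fin.sum_univ_three]
    congr 1
    norm_num [Matrix.cons_val_zero, Matrix.cons_val_one, Matrix.head_cons,
      Matrix.cons_val_two, Matrix.tail_cons]
  have hvle : Real.sqrt ((146900:ℝ)/2157961) ≤ 400/1469 := by
    have h1 : ((146900:ℝ)/2157961) ≤ (400/1469)^2 := by norm_num
    have h2 := Real.sqrt_le_sqrt h1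
    rwa [Real.sqrt_sq (by norm_num : (0:ℝ) ≤ 400/1469)] at h2
  have hvpos : (0:ℝ) < Real.sqrt (146900/2157961) := Real.sqrt_pos.2 (by norm_num)
  have harg : -((50:ℝ)/1469) / ((1/20) * Real.sqrt (146900/2157961)) ≤ -(5/2) := by
    rw [neg_div, neg_le_neg_iff, le_div_iff₀ (by positivity)]
    nlinarith [hvle]
  have hdotA : (![(100:ℝ)/1469, -370/1469, 0] ⬝ᵥ ![(-12:ℝ)/13, -5/13, 0]) = 50/1469 := by
    simp [dotProduct, Fin.sum_univ_three]
    norm_num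
  have hdotB : (![(100:ℝ)/1469, -370/1469, 0] ⬝ᵥ ![(112:ℝ)/113, 15/113, 0]) = 50/1469 := by
    simp [dotProduct, Fin.sum_univ_three]
    norm_num
  have hLA : gmRisk (1/20) ![-12/13, -5/13, 0]
      (![-12/13, -5/13, 0] + ![112/113, 15/113, 0]) ≤ 1/6 := by
    unfold gmRisk
    rw [hsum0, hdotA, hv]
    exact le_trans (Phi_mono harg) (le_trans Phi_le_chernoff (by norm_num))
  have hLB : gmRisk (1/20) ![112/113, 15/113, 0]
      (![-12/13, -5/13, 0] + ![112/113, 15/113, 0]) ≤ 1/6 := by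
    unfold gmRisk
    rw [hsum0, hdotB, hv]
    exact le_trans (Phi_mono harg) (le_trans Phi_le_chernoff (by norm_num))
  -- the minimizer has composite risk at least 1/4
  have hvn : 0 ≤ vnorm θ := Real.sqrt_nonneg _
  have hdθA : θ ⬝ᵥ ![(-12:ℝ)/13, -5/13, 0] = (-12/13)*θ 0 + (-5/13)*θ 1 := by
    simp [dotProduct, Fin.sum_univ_three]
    ring
  have hdθB : θ ⬝ᵥ ![(112:ℝ)/113, 15/113, 0] = (112/113)*θ 0 + (15/113)*θ 1 := by
    simp [dotProduct, Fin.sum_univ_three]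
    ring
  have hquarter : (1:ℝ)/4 ≤ (1/2) * gmRisk (1/20) ![-12/13, -5/13, 0] θ
      + (1/2) * gmRisk (1/20) ![112/113, 15/113, 0] θ := by
    rcases hab with ha | hb
    · have h12 : (1:ℝ)/2 ≤ gmRisk (1/20) ![-12/13, -5/13, 0] θ := by
        unfold gmRisk
        rw [hdθA, ← Phi_zero]
        apply Phi_mono
        apply div_nonneg (by linarith) (by positivity)
      have h0 : 0 ≤ gmRisk (1/20) ![(112:ℝ)/113, 15/113, 0] θ := Phi_nonneg _
      linarith [h12, h0]
    · have h12 : (1:ℝ)/2 ≤ gmRisk (1/20) ![112/113, 15/113, 0] θ := by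
        unfold gmRisk
        rw [hdθB, ← Phi_zero]
        apply Phi_mono
        apply div_nonneg (by linarith) (by positivity)
      have h0 : 0 ≤ gmRisk (1/20) ![(-12:ℝ)/13, -5/13, 0] θ := Phi_nonneg _
      linarith [h12, h0]
  linarith [hLA, hLB, hquarter]
end

section
/- Let d ≥ 1, σ > 0, λ ≥ 0, let μ_B ∈ ℝ^d be a unit vector, and let θ_A ∈ ℝ^d be arbitrary. Define L_B(θ) = (⟨θ, μ_B⟩ − 1)² + σ²‖θ‖². Then the unique minimizer of the objective L_B(θ) + λ ‖θ − θ_A‖² over θ ∈ ℝ^d equals (1/(σ² + λ)) · ( I_d − μ_B μ_Bᵀ/(1 + σ² + λ) ) (μ_B + λ θ_A). -/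
open Matrix

/-- for a unit vector `μ_B`, `σ > 0`, `λ ≥ 0` and arbitrary `θ_A`, the unique
minimizer of `L_B(θ) + λ‖θ − θ_A‖²` with `L_B(θ) = (⟨θ, μ_B⟩ − 1)² + σ²‖θ‖²` is
`(σ² + λ)⁻¹ (I_d − μ_B μ_Bᵀ/(1 + σ² + λ)) (μ_B + λ θ_A)`. -/
theorem stmt18 (d : ℕ) (hd : 1 ≤ d) (σ lam : ℝ) (hσ : 0 < σ) (hlam : 0 ≤ lam)
    (μB : Fin d → ℝ) (hunitB : vnorm μB = 1) (θA : Fin d → ℝ) :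
    ∀ θ : Fin d → ℝ,
      θ ≠ (σ ^ 2 + lam)⁻¹ •
            ((1 - (1 + σ ^ 2 + lam)⁻¹ • Matrix.vecMulVec μB μB).mulVec (μB + lam • θA)) →
      ((σ ^ 2 + lam)⁻¹ •
            ((1 - (1 + σ ^ 2 + lam)⁻¹ • Matrix.vecMulVec μB μB).mulVec (μB + lam • θA))
            ⬝ᵥ μB - 1) ^ 2
          + σ ^ 2 * vnorm ((σ ^ 2 + lam)⁻¹ •
              ((1 - (1 + σ ^ 2 + lam)⁻¹ • Matrix.vecMulVec μB μB).mulVec (μB + lam • θA))) ^ 2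
          + lam * vnorm ((σ ^ 2 + lam)⁻¹ •
              ((1 - (1 + σ ^ 2 + lam)⁻¹ • Matrix.vecMulVec μB μB).mulVec (μB + lam • θA))
              - θA) ^ 2
        < (θ ⬝ᵥ μB - 1) ^ 2 + σ ^ 2 * vnorm θ ^ 2 + lam * vnorm (θ - θA) ^ 2 := by
  intro θ hθ
  have hnorm : ∀ v : Fin d → ℝ, vnorm v ^ 2 = v ⬝ᵥ v := by
    intro v
    rw [vnorm, Real.sq_sqrt (by positivity)]
    simp [dotProduct, sq]
  have hμμ : μB ⬝ᵥ μB = 1 := by rw [← hnorm, hunitB, one_pow]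
  have hs0 : (0:ℝ) < σ ^ 2 + lam := by positivity
  have ht0 : (0:ℝ) < 1 + σ ^ 2 + lam := by linarith
  set b : Fin d → ℝ := μB + lam • θA with hb
  set θs : Fin d → ℝ := (σ ^ 2 + lam)⁻¹ •
      ((1 - (1 + σ ^ 2 + lam)⁻¹ • Matrix.vecMulVec μB μB).mulVec b) with hθsdef
  have hvmv : ∀ i, (Matrix.vecMulVec μB μB *ᵥ b) i = μB i * (μB ⬝ᵥ b) := by
    intro i
    simp [Matrix.mulVec, Matrix.vecMulVec, dotProduct, Finset.mul_sum, mul_assoc]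
  have hθsi : ∀ i, θs i =
      (σ ^ 2 + lam)⁻¹ * (b i - (1 + σ ^ 2 + lam)⁻¹ * (μB ⬝ᵥ b) * μB i) := by
    intro i
    rw [hθsdef]
    simp only [Pi.smul_apply, smul_eq_mul, Matrix.sub_mulVec, Matrix.one_mulVec,
      Matrix.smul_mulVec, Pi.sub_apply, hvmv]
    ring
  have hbi : ∀ i, b i = μB i + lam * θA i := by intro i; simp [hb]
  have hθsμ : θs ⬝ᵥ μB = (1 + σ ^ 2 + lam)⁻¹ * (μB ⬝ᵥ b) := by
    have : θs ⬝ᵥ μB = ∑ i, θs i * μB i := rfl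
    rw [this]
    have hbμ : ∑ i, b i * μB i = μB ⬝ᵥ b := by
      rw [dotProduct]; exact Finset.sum_congr rfl fun i _ => mul_comm _ _
    have expand : ∀ i, θs i * μB i =
        (σ ^ 2 + lam)⁻¹ * (b i * μB i)
          - (σ ^ 2 + lam)⁻¹ * (1 + σ ^ 2 + lam)⁻¹ * (μB ⬝ᵥ b) * (μB i * μB i) := by
      intro i; rw [hθsi i]; ring
    rw [Finset.sum_congr rfl fun i _ => expand i, Finset.sum_sub_distrib,
      ← Finset.mul_sum, ← Finset.mul_sum, hbμ]
    have : ∑ i, μB i * μB i = 1 := hμμ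
    rw [this]
    field_simp
    ring
  have hstat : ∀ i, (θs ⬝ᵥ μB - 1) * μB i + σ ^ 2 * θs i + lam * (θs i - θA i) = 0 := by
    intro i
    rw [hθsμ, hθsi i, hbi i]
    field_simp
    ring
  set u : Fin d → ℝ := θ - θs with hudef
  have hu : ∀ i, θ i = θs i + u i := by intro i; simp [hudef]
  have hzero : (θs ⬝ᵥ μB - 1) * (μB ⬝ᵥ u) + σ ^ 2 * (θs ⬝ᵥ u)
      + lam * ((θs - θA) ⬝ᵥ u) = 0 := by
    have h1 : (θs ⬝ᵥ μB - 1) * (μB ⬝ᵥ u) + σ ^ 2 * (θs ⬝ᵥ u) + lam * ((θs - θA) ⬝ᵥ u)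
        = ∑ i, ((θs ⬝ᵥ μB - 1) * μB i + σ ^ 2 * θs i + lam * (θs i - θA i)) * u i := by
      simp only [dotProduct, Finset.mul_sum, Pi.sub_apply, ← Finset.sum_add_distrib]
      exact Finset.sum_congr rfl fun i _ => by ring
    rw [h1]
    simp [hstat]
  have hθeq : θ = θs + u := funext hu
  have hdiff : (θ ⬝ᵥ μB - 1) ^ 2 + σ ^ 2 * (θ ⬝ᵥ θ) + lam * ((θ - θA) ⬝ᵥ (θ - θA))
      = (θs ⬝ᵥ μB - 1) ^ 2 + σ ^ 2 * (θs ⬝ᵥ θs) + lam * ((θs - θA) ⬝ᵥ (θs - θA))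
        + ((u ⬝ᵥ μB) ^ 2 + (σ ^ 2 + lam) * (u ⬝ᵥ u))
        + 2 * ((θs ⬝ᵥ μB - 1) * (μB ⬝ᵥ u) + σ ^ 2 * (θs ⬝ᵥ u)
            + lam * ((θs - θA) ⬝ᵥ u)) := by
    rw [hθeq]
    simp only [add_dotProduct, dotProduct_add, sub_dotProduct, dotProduct_sub]
    rw [dotProduct_comm u θs, dotProduct_comm θA θs, dotProduct_comm θA u,
      dotProduct_comm μB u]
    ring
  have hune : u ≠ 0 := sub_ne_zero.mpr hθ
  have hupos : 0 < u ⬝ᵥ u := by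
    rcases lt_or_eq_of_le (Finset.sum_nonneg fun i _ => mul_self_nonneg (u i) :
        (0:ℝ) ≤ u ⬝ᵥ u) with h | h
    · exact h
    · exact absurd (dotProduct_self_eq_zero.mp h.symm) hune
  simp only [hnorm]
  rw [hdiff, hzero]
  nlinarith [sq_nonneg (u ⬝ᵥ μB), mul_pos hs0 hupos]
end
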